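/- arXiv:2307.16823 — 8 statements merged into one kernel-verified Lean document; each statement's English description precedes it below -/
import Mathlib

section
/- Let I be an ideal on the positive integers N containing all finite sets, and let ν : P(N) → R be a normalized capacity that is I-invariant. Then there exists a normalized capacity ρ on the Borel σ-algebra of Ult(I) such that for every A ⊆ N one has ν(A) = ρ({F ∈ Ult(I) : A ∈ F}) (equivalently, ν(A) equals the Choquet integral over Ult(I) of the function F ↦ μ_F(A) with respect to ρ). -/
open Filter Set
open scoped symmDiff

/-- An ideal on `ℕ` (containing all finite sets): a family of subsets closed
under subsets and finite unions, with `univ ∉ I` and `Fin ⊆ I`. -/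
def IsIdealOn (I : Set (Set ℕ)) : Prop :=
  (∀ A B : Set ℕ, A ⊆ B → B ∈ I → A ∈ I) ∧
  (∀ A B : Set ℕ, A ∈ I → B ∈ I → A ∪ B ∈ I) ∧
  (Set.univ : Set ℕ) ∉ I ∧
  (∀ A : Set ℕ, A.Finite → A ∈ I)

/-- `Ult I`: the ultrafilters on `ℕ` containing the dual filter of `I`
(equivalently, containing the complement of each member of `I`), as a
subspace of the Stone–Čech compactification `βℕ = Ultrafilter ℕ`. -/
abbrev Ult (I : Set (Set ℕ)) : Type := {F : Ultrafilter ℕ // ∀ A ∈ I, Aᶜ ∈ F}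

/-- If `ν` is an `I`-invariant normalized capacity on `𝒫(ℕ)`, then there is a
normalized capacity `ρ` on the Borel σ-algebra of `Ult I` with
`ν A = ρ {F ∈ Ult I : A ∈ F}` for all `A ⊆ ℕ`. -/
theorem statement0 (I : Set (Set ℕ)) (hI : IsIdealOn I)
    (ν : Set ℕ → ℝ)
    (hmono : ∀ A B : Set ℕ, A ⊆ B → ν A ≤ ν B)
    (hempty : ν ∅ = 0) (huniv : ν Set.univ = 1)
    (hinv : ∀ A B : Set ℕ, A ∆ B ∈ I → ν A = ν B) :
    ∃ ρ : Set (Ult I) → ℝ,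
      ρ ∅ = 0 ∧ ρ Set.univ = 1 ∧
      (∀ s t : Set (Ult I), @MeasurableSet _ (borel (Ult I)) s →
        @MeasurableSet _ (borel (Ult I)) t → s ⊆ t → ρ s ≤ ρ t) ∧
      ∀ A : Set ℕ, ν A = ρ {F : Ult I | A ∈ (F : Ultrafilter ℕ)} := by
  obtain ⟨hsub, hun, hu, hfin⟩ := hI
  -- hat A
  set hat : Set ℕ → Set (Ult I) :=
    fun A => {F : Ult I | A ∈ (F : Ultrafilter ℕ)} with hhat
  -- key: if A ∉ I, there is an ultrafilter in Ult I containing A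
  have key : ∀ A : Set ℕ, A ∉ I → ∃ F : Ult I, A ∈ (F : Ultrafilter ℕ) := by
    intro A hA
    let d : Filter ℕ :=
      { sets := {S | A \ S ∈ I}
        univ_sets := by
          show A \ univ ∈ I
          rw [Set.diff_univ]; exact hfin ∅ Set.finite_empty
        sets_of_superset := fun {S T} hS hST => by
          exact hsub _ _ (Set.diff_subset_diff_right hST) hS
        inter_sets := fun {S T} hS hT => by
          show A \ (S ∩ T) ∈ I
          rw [Set.diff_inter]; exact hun _ _ hS hT }
    have hdne : d.NeBot := by
      refine ⟨fun hbot => ?_⟩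
      have : (∅ : Set ℕ) ∈ d := hbot ▸ Filter.mem_bot
      have : A \ ∅ ∈ I := this
      rw [Set.diff_empty] at this
      exact hA this
    have hAd : A ∈ d := by show A \ A ∈ I; rw [Set.diff_self]; exact hfin ∅ Set.finite_empty
    refine ⟨⟨Ultrafilter.of d, fun B hB => ?_⟩, Ultrafilter.of_le d hAd⟩
    apply Ultrafilter.of_le d
    show A \ Bᶜ ∈ I
    exact hsub _ _ (fun x hx => hx.2 |> fun h => by simpa using Set.not_notMem.mp h) hB
  -- hat ∅ = ∅
  have hatempty : hat ∅ = ∅ := by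
    ext F; simp [hhat, (F : Ultrafilter ℕ).empty_notMem]
  -- monotonicity transfer
  have hkey2 : ∀ A B : Set ℕ, hat A ⊆ hat B → ν A ≤ ν B := by
    intro A B hAB
    have hdiff : A \ B ∈ I := by
      by_contra hd
      obtain ⟨F, hF⟩ := key _ hd
      have hAF : A ∈ (F : Ultrafilter ℕ) :=
        Filter.mem_of_superset hF Set.diff_subset
      have hBF : B ∈ (F : Ultrafilter ℕ) := hAB hAF
      have hBcF : Bᶜ ∈ (F : Ultrafilter ℕ) :=
        Filter.mem_of_superset hF (fun x hx => hx.2)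
      exact (F : Ultrafilter ℕ).empty_notMem
        (by simpa using Filter.inter_mem hBF hBcF)
    have : ν A = ν (A ∩ B) := by
      apply hinv
      refine hsub _ (A \ B) (fun x hx => ?_) hdiff
      rcases hx with hx | hx
      · exact ⟨hx.1, fun hB => hx.2 ⟨hx.1, hB⟩⟩
      · exact absurd hx.1.1 (fun h => hx.2 h)
    rw [this]
    exact hmono _ _ Set.inter_subset_right
  -- the capacity
  set ρ : Set (Ult I) → ℝ := fun S => sSup (ν '' {A | hat A ⊆ S}) with hρ
  have hne : ∀ S : Set (Ult I), (ν '' {A | hat A ⊆ S}).Nonempty := by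
    intro S
    exact ⟨ν ∅, ⟨∅, by simp [hatempty], rfl⟩⟩
  have hbdd : ∀ S : Set (Ult I), BddAbove (ν '' {A | hat A ⊆ S}) := by
    intro S
    refine ⟨1, fun x ⟨A, _, hx⟩ => ?_⟩
    rw [← hx, ← huniv]; exact hmono _ _ (Set.subset_univ A)
  have hval : ∀ A : Set ℕ, ρ (hat A) = ν A := by
    intro A
    apply le_antisymm
    · apply csSup_le (hne _)
      rintro x ⟨B, hB, rfl⟩
      exact hkey2 _ _ hB
    · exact le_csSup (hbdd _) ⟨A, show hat A ⊆ hat A from subset_rfl, rfl⟩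
  refine ⟨ρ, ?_, ?_, ?_, fun A => (hval A).symm⟩
  · rw [← hatempty, hval, hempty]
  · have : hat univ = univ := by
      ext F; simp only [hhat, Set.mem_setOf_eq, Set.mem_univ, iff_true]; exact Filter.univ_mem
    rw [← this, hval, huniv]
  · intro s t _ _ hst
    apply csSup_le (hne _)
    rintro x ⟨B, hB, rfl⟩
    exact le_csSup (hbdd _) ⟨B, hB.trans hst, rfl⟩
end

section
/- Let I be an ideal on the positive integers N containing all finite sets, and let ν : P(N) → R be a normalized capacity that is I-invariant. Then there exists a normalized capacity ρ on the Borel σ-algebra of Ult(I) such that for every bounded sequence x : N → R, the Choquet integral of x with respect to ν equals the Choquet integral over Ult(I), with respect to ρ, of the function F ↦ lim_F x (the limit of x along the ultrafilter F, which equals the Choquet integral of x with respect to μ_F). -/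
/-!
The capacity on `Ult I` is the inner extension `ρ S = sup {ν A : Â ⊆ S}` of `ν` from the basic
clopen sets `Â = {F : A ∈ F}`. Since `ν` is `I`-invariant and monotone, `Â ⊆ B̂` forces
`ν A ≤ ν B`, so `ρ (Â) = ν A`. For `s < t` the level sets of `F ↦ lim_F x` are squeezed
between basic clopen sets, `Â_t ⊆ {F : lim_F x ≥ t} ⊆ Â_s` with `A_t = {x ≥ t}`, so
`t ↦ ρ {lim x ≥ t}` agrees with the antitone function `t ↦ ν {x ≥ t}` at each of its continuity
points, i.e. almost everywhere, and the two Choquet integrals coincide. Finally the Choquet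
integral with respect to `μ_F` is `lim_F x`, because `t ↦ μ_F {x ≥ t}` is the indicator of
`(-∞, lim_F x)` off the single point `lim_F x`.
-/

open Filter Set MeasureTheory
open scoped symmDiff

/-- The Choquet integral of `f : S → ℝ` with respect to a monotone set function
`ν : Set S → ℝ`:
`∫_0^∞ ν {f ≥ t} dt + ∫_{-∞}^0 (ν {f ≥ t} - ν S) dt`
(for bounded `f` and a normalized capacity `ν` the integrands are monotone,
bounded and eventually zero, so these Lebesgue integrals coincide with the
improper Riemann integrals of the paper). -/
noncomputable def choquetInt {S : Type*} (ν : Set S → ℝ) (f : S → ℝ) : ℝ :=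
  (∫ t in Set.Ioi (0 : ℝ), ν {s | t ≤ f s}) +
    ∫ t in Set.Iio (0 : ℝ), (ν {s | t ≤ f s} - ν Set.univ)

/-- The `{0,1}`-valued finitely additive probability measure `μ_F` associated
with an ultrafilter `F`: `μ_F A = 1` iff `A ∈ F`. -/
noncomputable def muUlt (F : Ultrafilter ℕ) : Set ℕ → ℝ :=
  fun A => Set.indicator {B : Set ℕ | B ∈ F} (fun _ => (1 : ℝ)) A

open Topology

lemma choquetInt_eq_of_ae_eq {S T : Type*} {ν : Set S → ℝ} {ρ : Set T → ℝ} {f : S → ℝ}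
    {g : T → ℝ} (hlevel : ∀ᵐ t, ν {s | t ≤ f s} = ρ {s | t ≤ g s}) (huniv : ν univ = ρ univ) :
    choquetInt ν f = choquetInt ρ g := by
  unfold choquetInt
  rw [huniv]
  congr 1 <;>
    exact integral_congr_ae (ae_restrict_of_ae (hlevel.mono fun t ht => by dsimp only; rw [ht]))

lemma integral_Ioi_add_integral_Iio_sub_one_of_step {φ : ℝ → ℝ} {L : ℝ}
    (h1 : ∀ t < L, φ t = 1) (h0 : ∀ t, L < t → φ t = 0) :
    (∫ t in Ioi 0, φ t) + ∫ t in Iio 0, (φ t - 1) = L := by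
  have hφ : φ =ᵐ[volume] (Iio L).indicator 1 := by
    filter_upwards [Measure.ae_ne volume L] with t htL
    rcases htL.lt_or_gt with ht | ht
    · simp [h1 t ht, ht]
    · simp [h0 t ht, ht.not_gt]
  have hφ' : (fun t => φ t - 1) =ᵐ[volume] fun t => -(Ioi L).indicator 1 t := by
    filter_upwards [hφ, Measure.ae_ne volume L] with t ht htL
    rcases htL.lt_or_gt with h | h <;> simp [ht, h, h.not_gt]
  rw [integral_congr_ae (ae_restrict_of_ae hφ), integral_congr_ae (ae_restrict_of_ae hφ'),
    integral_neg, integral_indicator_one measurableSet_Iio,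
    integral_indicator_one measurableSet_Ioi, measureReal_restrict_apply measurableSet_Iio,
    measureReal_restrict_apply measurableSet_Ioi, Iio_inter_Ioi, Ioi_inter_Iio,
    Real.volume_real_Ioo, Real.volume_real_Ioo]
  rcases le_total L 0 with h | h <;> simp [h]

lemma Ultrafilter.tendsto_limUnder_of_bounded {α : Type*} (F : Ultrafilter α) {x : α → ℝ} {C : ℝ}
    (hx : ∀ n, |x n| ≤ C) : Tendsto x F (𝓝 (limUnder F x)) := by
  refine tendsto_nhds_limUnder ?_
  obtain ⟨L, -, hL⟩ := isCompact_Icc.ultrafilter_le_nhds (F.map x)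
    (le_principal_iff.2 (mem_map.2 (univ_mem' fun n => abs_le.1 (hx n))))
  exact ⟨L, hL⟩

lemma choquetInt_muUlt (F : Ultrafilter ℕ) {x : ℕ → ℝ} {C : ℝ} (hx : ∀ n, |x n| ≤ C) :
    choquetInt (muUlt F) x = limUnder F x := by
  have hlim := F.tendsto_limUnder_of_bounded hx
  refine Eq.trans ?_ (integral_Ioi_add_integral_Iio_sub_one_of_step
    (φ := fun t => muUlt F {n | t ≤ x n}) (fun t ht => ?_) fun t ht => ?_)
  · have huniv : (univ : Set ℕ) ∈ F := univ_mem
    simp [choquetInt, muUlt, huniv]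
  · exact indicator_of_mem ((hlim.eventually_const_lt ht).mono fun _ => le_of_lt) _
  · exact indicator_of_notMem (fun hmem => ht.not_ge (ge_of_tendsto hlim hmem)) _

lemma Antitone.ae_eq_of_le_of_forall_lt_imp_le {h r : ℝ → ℝ} (hh : Antitone h)
    (hle : ∀ t, h t ≤ r t) (hlt : ∀ s t, s < t → r t ≤ h s) : h =ᵐ[volume] r := by
  filter_upwards [hh.countable_not_continuousAt.ae_notMem volume] with t ht
  have hleft : Tendsto h (𝓝[<] t) (𝓝 (h t)) :=
    (not_not.1 ht).tendsto.mono_left nhdsWithin_le_nhds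
  exact le_antisymm (hle t) (_root_.ge_of_tendsto hleft
    (eventually_nhdsWithin_of_forall fun s hs => hlt s t hs))

namespace IsIdealOn

variable {I : Set (Set ℕ)}

lemma exists_ult_mem (hI : IsIdealOn I) {A : Set ℕ} (hA : A ∉ I) :
    ∃ F : Ult I, A ∈ (F : Ultrafilter ℕ) := by
  obtain ⟨hdown, hunion, -, hfin⟩ := hI
  let dual : Filter ℕ := comk (· ∈ I) (hfin ∅ finite_empty) (fun t ht s hst => hdown s t hst ht)
    fun s hs t ht => hunion s t hs ht
  have hne : (dual ⊓ 𝓟 A).NeBot := by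
    refine inf_principal_neBot_iff.2 fun U hU => not_not.1 fun hUA => hA ?_
    refine hdown A Uᶜ (fun n hn hUn => hUA ⟨n, hUn, hn⟩) (mem_comk.1 hU)
  obtain ⟨F, hF⟩ := Ultrafilter.exists_le (dual ⊓ 𝓟 A)
  refine ⟨⟨F, fun B hB => hF.trans inf_le_left (mem_comk.2 ?_)⟩,
    le_principal_iff.1 (hF.trans inf_le_right)⟩
  rwa [compl_compl]

end IsIdealOn

section InnerCapacity

variable (I : Set (Set ℕ))

def basicClopen (A : Set ℕ) : Set (Ult I) := {F | A ∈ (F : Ultrafilter ℕ)}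

noncomputable def innerCapacity (ν : Set ℕ → ℝ) (S : Set (Ult I)) : ℝ :=
  sSup (ν '' {A | basicClopen I A ⊆ S})

variable {I}

@[simp]
lemma basicClopen_empty : basicClopen I ∅ = ∅ :=
  eq_empty_of_forall_notMem fun F => Ultrafilter.empty_notMem (f := F.1)

@[simp]
lemma basicClopen_univ : basicClopen I univ = univ :=
  eq_univ_of_forall fun F => univ_mem (f := F.1.toFilter)

lemma diff_mem_of_basicClopen_subset (hI : IsIdealOn I) {A B : Set ℕ}
    (h : basicClopen I A ⊆ basicClopen I B) : A \ B ∈ I := by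
  by_contra hAB
  obtain ⟨F, hF⟩ := hI.exists_ult_mem hAB
  have hB : B ∈ (F : Ultrafilter ℕ) := h (mem_of_superset hF sdiff_subset)
  simpa using inter_mem hF hB

lemma basicClopen_subset_setOf_le_limUnder {x : ℕ → ℝ} {C : ℝ} (hx : ∀ n, |x n| ≤ C) (t : ℝ) :
    basicClopen I {n | t ≤ x n} ⊆ {F | t ≤ limUnder (F : Ultrafilter ℕ) x} := fun F hF =>
  ge_of_tendsto ((F : Ultrafilter ℕ).tendsto_limUnder_of_bounded hx) hF

lemma setOf_le_limUnder_subset_basicClopen {x : ℕ → ℝ} {C : ℝ} (hx : ∀ n, |x n| ≤ C) {s t : ℝ}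
    (hst : s < t) :
    {F : Ult I | t ≤ limUnder (F : Ultrafilter ℕ) x} ⊆ basicClopen I {n | s ≤ x n} := fun F hF =>
  (((F : Ultrafilter ℕ).tendsto_limUnder_of_bounded hx).eventually_const_lt
    (hst.trans_le hF)).mono fun _ => le_of_lt

variable {ν : Set ℕ → ℝ} (hmono : ∀ A B : Set ℕ, A ⊆ B → ν A ≤ ν B)
include hmono

lemma le_of_basicClopen_subset (hI : IsIdealOn I) (hinv : ∀ A B : Set ℕ, A ∆ B ∈ I → ν A = ν B)
    {A B : Set ℕ} (h : basicClopen I A ⊆ basicClopen I B) : ν A ≤ ν B := by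
  have hsd : A ∆ (A ∩ B) = A \ B := by
    ext n
    simp only [mem_symmDiff, mem_inter_iff, Set.mem_sdiff]
    tauto
  calc ν A = ν (A ∩ B) := hinv _ _ (hsd ▸ diff_mem_of_basicClopen_subset hI h)
    _ ≤ ν B := hmono _ _ inter_subset_right

lemma innerCapacity_mono {S T : Set (Ult I)} (hST : S ⊆ T) :
    innerCapacity I ν S ≤ innerCapacity I ν T :=
  csSup_le_csSup ⟨ν univ, forall_mem_image.2 fun A _ => hmono A univ (subset_univ A)⟩
    ⟨ν ∅, ∅, by simp, rfl⟩ (image_mono fun _ hA => hA.trans hST)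

lemma innerCapacity_basicClopen (hI : IsIdealOn I)
    (hinv : ∀ A B : Set ℕ, A ∆ B ∈ I → ν A = ν B) (B : Set ℕ) :
    innerCapacity I ν (basicClopen I B) = ν B :=
  le_antisymm (csSup_le ⟨ν B, B, Subset.rfl, rfl⟩ (forall_mem_image.2 fun _ hA =>
      le_of_basicClopen_subset hmono hI hinv hA))
    (le_csSup ⟨ν univ, forall_mem_image.2 fun A _ => hmono A univ (subset_univ A)⟩
      ⟨B, Subset.rfl, rfl⟩)

end InnerCapacity

/-- If `ν` is an `I`-invariant normalized capacity on `𝒫(ℕ)`, then there is a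
normalized capacity `ρ` on the Borel σ-algebra of `Ult I` such that for every bounded
sequence `x : ℕ → ℝ`, the Choquet integral of `x` w.r.t. `ν` equals the Choquet integral
over `Ult I`, w.r.t. `ρ`, of `F ↦ lim_F x` (the limit of `x` along `F`, which equals the
Choquet integral of `x` w.r.t. `μ_F`). -/
theorem statement2 (I : Set (Set ℕ)) (hI : IsIdealOn I)
    (ν : Set ℕ → ℝ)
    (hmono : ∀ A B : Set ℕ, A ⊆ B → ν A ≤ ν B)
    (hempty : ν ∅ = 0) (huniv : ν Set.univ = 1)
    (hinv : ∀ A B : Set ℕ, A ∆ B ∈ I → ν A = ν B) :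
    ∃ ρ : Set (Ult I) → ℝ,
      ρ ∅ = 0 ∧ ρ Set.univ = 1 ∧
      (∀ s t : Set (Ult I), @MeasurableSet _ (borel (Ult I)) s →
        @MeasurableSet _ (borel (Ult I)) t → s ⊆ t → ρ s ≤ ρ t) ∧
      ∀ x : ℕ → ℝ, (∃ C : ℝ, ∀ n, |x n| ≤ C) →
        choquetInt ν x =
          choquetInt ρ (fun F : Ult I => choquetInt (muUlt (F : Ultrafilter ℕ)) x) := by
  have hρ := innerCapacity_basicClopen hmono hI hinv
  have hρuniv : innerCapacity I ν univ = ν univ := by simpa using hρ univ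
  refine ⟨innerCapacity I ν, by simpa [hempty] using hρ ∅, hρuniv.trans huniv,
    fun s t _ _ hst => innerCapacity_mono hmono hst, ?_⟩
  rintro x ⟨C, hC⟩
  simp only [choquetInt_muUlt _ hC]
  have hanti : Antitone fun t => ν {n | t ≤ x n} := fun s t hst =>
    hmono _ _ fun _ hn => hst.trans hn
  refine choquetInt_eq_of_ae_eq (hanti.ae_eq_of_le_of_forall_lt_imp_le (fun t => ?_)
    fun s t hst => ?_) hρuniv.symm
  · exact (hρ _).symm.trans_le
      (innerCapacity_mono hmono (basicClopen_subset_setOf_le_limUnder hC t))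
  · exact (innerCapacity_mono hmono (setOf_le_limUnder_subset_basicClopen hC hst)).trans_eq (hρ _)
end

section
/- If ν : P(N) → R is an abstract upper density, then there exists a normalized capacity ρ on the Borel σ-algebra of Ult(Z_ν) such that ν(A) = ρ({F ∈ Ult(Z_ν) : A ∈ F}) for every A ⊆ N, where Z_ν := {A ⊆ N : ν(A) = 0}. -/
open Filter Set

/-- If `ν : 𝒫(ℕ) → ℝ` is an abstract upper density (a normalized capacity
which is diffuse and subadditive), then there is a normalized capacity `ρ` on the Borel
σ-algebra of `Ult (Z_ν)`, where `Z_ν = {A : ν A = 0}`, with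
`ν A = ρ {F ∈ Ult (Z_ν) : A ∈ F}` for all `A ⊆ ℕ`. -/
theorem statement3 (ν : Set ℕ → ℝ)
    (hmono : ∀ A B : Set ℕ, A ⊆ B → ν A ≤ ν B)
    (hempty : ν ∅ = 0) (huniv : ν Set.univ = 1)
    (hdiffuse : ∀ A : Set ℕ, A.Finite → ν A = 0)
    (hsubadd : ∀ A B : Set ℕ, ν (A ∪ B) ≤ ν A + ν B) :
    ∃ ρ : Set (Ult {A : Set ℕ | ν A = 0}) → ℝ,
      ρ ∅ = 0 ∧ ρ Set.univ = 1 ∧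
      (∀ s t : Set (Ult {A : Set ℕ | ν A = 0}),
        @MeasurableSet _ (borel (Ult {A : Set ℕ | ν A = 0})) s →
        @MeasurableSet _ (borel (Ult {A : Set ℕ | ν A = 0})) t → s ⊆ t → ρ s ≤ ρ t) ∧
      ∀ A : Set ℕ,
        ν A = ρ {F : Ult {A : Set ℕ | ν A = 0} | A ∈ (F : Ultrafilter ℕ)} := by
  have hnonneg : ∀ A : Set ℕ, 0 ≤ ν A := fun A => hempty ▸ hmono ∅ A (empty_subset A)
  -- key extension lemma: every set of positive density lies in some ultrafilter in Ult Z
  have key : ∀ C : Set ℕ, ν C ≠ 0 →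
      ∃ F : Ult {A : Set ℕ | ν A = 0}, C ∈ (F : Ultrafilter ℕ) := by
    intro C hC
    let f : Filter ℕ :=
      { sets := {S | ν (C \ S) = 0}
        univ_sets := by simp [hempty]
        sets_of_superset := by
          intro S T hS hST
          refine le_antisymm ?_ (hnonneg _)
          calc ν (C \ T) ≤ ν (C \ S) := hmono _ _ (diff_subset_diff_right hST)
            _ = 0 := hS
        inter_sets := by
          intro S T hS hT
          refine le_antisymm ?_ (hnonneg _)
          have : C \ (S ∩ T) = (C \ S) ∪ (C \ T) := Set.diff_inter
          calc ν (C \ (S ∩ T)) = ν ((C \ S) ∪ (C \ T)) := by rw [this]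
            _ ≤ ν (C \ S) + ν (C \ T) := hsubadd _ _
            _ = 0 := by rw [hS, hT, add_zero] }
    have hCf : C ∈ f := by
      show ν (C \ C) = 0
      simp [hempty]
    have hne : f.NeBot := by
      refine ⟨fun hbot => hC ?_⟩
      have : (∅ : Set ℕ) ∈ f := hbot ▸ mem_bot
      have h0 : ν (C \ ∅) = 0 := this
      simpa using h0
    have hle := Ultrafilter.of_le f
    refine ⟨⟨Ultrafilter.of f, ?_⟩, hle hCf⟩
    intro A hA
    have : Aᶜ ∈ f := by
      show ν (C \ Aᶜ) = 0
      refine le_antisymm ?_ (hnonneg _)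
      calc ν (C \ Aᶜ) ≤ ν A := hmono _ _ (by intro x hx; simpa using hx.2)
        _ = 0 := hA
    exact hle this
  classical
  set Z := {A : Set ℕ | ν A = 0} with hZ
  -- the capacity
  refine ⟨fun S => sInf (ν '' {A : Set ℕ |
      S ⊆ {F : Ult Z | A ∈ (F : Ultrafilter ℕ)}}), ?_, ?_, ?_, ?_⟩
  · -- ρ ∅ = 0
    refine le_antisymm ?_ (le_csInf ⟨1, Set.univ, fun F _ => Filter.univ_mem, huniv⟩ ?_)
    · refine csInf_le ⟨0, ?_⟩ ⟨∅, by simp, hempty⟩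
      rintro x ⟨A, -, rfl⟩; exact hnonneg A
    · rintro x ⟨A, -, rfl⟩; exact hnonneg A
  · -- ρ univ = 1
    refine le_antisymm (csInf_le ⟨0, ?_⟩ ⟨Set.univ, fun F _ => Filter.univ_mem, huniv⟩) (le_csInf ⟨1, Set.univ, fun F _ => Filter.univ_mem, huniv⟩ ?_)
    · rintro x ⟨A, -, rfl⟩; exact hnonneg A
    · rintro x ⟨A, hA, rfl⟩
      have hAc : ν Aᶜ = 0 := by
        by_contra h
        obtain ⟨F, hF⟩ := key Aᶜ h
        have hAF : A ∈ (F : Ultrafilter ℕ) := hA (mem_univ F)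
        exact (Ultrafilter.compl_notMem_iff.mpr hAF) hF
      calc (1 : ℝ) = ν Set.univ := huniv.symm
        _ = ν (A ∪ Aᶜ) := by rw [Set.union_compl_self]
        _ ≤ ν A + ν Aᶜ := hsubadd _ _
        _ = ν A := by rw [hAc, add_zero]
  · -- monotone
    intro s t _ _ hst
    refine le_csInf ⟨1, Set.univ, fun F _ => Filter.univ_mem, huniv⟩ ?_
    rintro x ⟨A, hA, rfl⟩
    exact csInf_le ⟨0, by rintro x ⟨B, -, rfl⟩; exact hnonneg B⟩
      ⟨A, hst.trans hA, rfl⟩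
  · -- ν A = ρ {F | A ∈ F}
    intro A
    refine le_antisymm (le_csInf ⟨ν A, A, fun F hF => hF, rfl⟩ ?_)
      (csInf_le ⟨0, by rintro x ⟨B, -, rfl⟩; exact hnonneg B⟩ ⟨A, fun F hF => hF, rfl⟩)
    rintro x ⟨B, hB, rfl⟩
    have hAB : ν (A \ B) = 0 := by
      by_contra h
      obtain ⟨F, hF⟩ := key (A \ B) h
      have hAF : A ∈ (F : Ultrafilter ℕ) :=
        (F : Ultrafilter ℕ).mem_of_superset hF diff_subset
      have hBF : B ∈ (F : Ultrafilter ℕ) := hB hAF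
      have hBcF : Bᶜ ∈ (F : Ultrafilter ℕ) :=
        (F : Ultrafilter ℕ).mem_of_superset hF (fun x hx => hx.2)
      exact (Ultrafilter.compl_notMem_iff.mpr hBF) hBcF
    calc ν A = ν ((A ∩ B) ∪ (A \ B)) := by rw [Set.inter_union_diff]
      _ ≤ ν (A ∩ B) + ν (A \ B) := hsubadd _ _
      _ = ν (A ∩ B) := by rw [hAB, add_zero]
      _ ≤ ν B := hmono _ _ Set.inter_subset_right
end

section
/- Let φ : P(N) → [0,∞] be a lower semicontinuous submeasure with ‖N‖_φ = 1, where ‖A‖_φ := lim_n φ(A \ [1,n]), and let I = Exh(φ) := {A ⊆ N : ‖A‖_φ = 0}. Then there exists a normalized capacity ρ on the Borel σ-algebra of Ult(I) such that ‖A‖_φ = ρ({F ∈ Ult(I) : A ∈ F}) for every A ⊆ N. -/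
open Filter Set

/-! Since `φ` is monotone and subadditive, so is `‖·‖_φ`, whose null sets form the ideal `I`.
A set `A` of positive norm meets every member of `I*`, so some ultrafilter in `Ult I` contains
it; consequently the clopen set `{F : A ∈ F}` is contained in `{F : B ∈ F}` only if
`‖A \ B‖_φ = 0`, i.e. only if `‖A‖_φ ≤ ‖B‖_φ`. The norm is therefore a monotone function of
the clopen sets, and `ρ s := inf {‖A‖_φ : s ⊆ {F : A ∈ F}}` extends it to a capacity. -/

section TailLimit

variable {α ι : Type*} {φ L : Set α → ENNReal} {l : Filter ι} [l.NeBot] {K : ι → Set α}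

theorem tailLimit_mono (hmono : Monotone φ)
    (hL : ∀ A, Tendsto (fun i => φ (A \ K i)) l (nhds (L A))) : Monotone L :=
  fun _ _ h => le_of_tendsto_of_tendsto' (hL _) (hL _) fun _ => hmono (sdiff_subset_sdiff_left h)

theorem tailLimit_union_le (hsubadd : ∀ A B, φ (A ∪ B) ≤ φ A + φ B)
    (hL : ∀ A, Tendsto (fun i => φ (A \ K i)) l (nhds (L A))) (A B : Set α) :
    L (A ∪ B) ≤ L A + L B :=
  le_of_tendsto_of_tendsto' (hL _) ((hL A).add (hL B)) fun i => by
    simpa only [union_sdiff_distrib] using hsubadd (A \ K i) (B \ K i)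

theorem tailLimit_empty (hL : ∀ A, Tendsto (fun i => φ (A \ K i)) l (nhds (L A))) :
    L ∅ = φ ∅ :=
  tendsto_nhds_unique (hL ∅) (by simpa only [empty_sdiff] using tendsto_const_nhds)

end TailLimit

section NullIdeal

variable {α : Type*} {μ : Set α → ENNReal}

theorem exists_ultrafilter_mem_of_ne_zero (hmono : Monotone μ)
    (hsub : ∀ A B, μ (A ∪ B) ≤ μ A + μ B) (h0 : μ ∅ = 0) {A : Set α} (hA : μ A ≠ 0) :
    ∃ U : Ultrafilter α, (∀ B, μ B = 0 → Bᶜ ∈ U) ∧ A ∈ U := by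
  let dual : Filter α := comk (μ · = 0) h0
    (fun _ ht _ hst => le_antisymm (ht ▸ hmono hst) bot_le)
    (fun _ hs _ ht => le_antisymm ((hsub _ _).trans (by rw [hs, ht, add_zero])) bot_le)
  have : (dual ⊓ 𝓟 A).NeBot := by
    refine inf_principal_neBot_iff.2 fun U hU => nonempty_iff_ne_empty.2 fun hUA => hA ?_
    exact le_antisymm ((hmono fun x hx hxU => hUA.subset ⟨hxU, hx⟩).trans_eq hU) bot_le
  obtain ⟨U, hU⟩ := Ultrafilter.exists_le (dual ⊓ 𝓟 A)
  exact ⟨U, fun B hB => le_inf_iff.1 hU |>.1 (compl_mem_comk.2 hB),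
    le_inf_iff.1 hU |>.2 (mem_principal_self A)⟩

theorem le_of_forall_ultrafilter_mem_imp (hmono : Monotone μ)
    (hsub : ∀ A B, μ (A ∪ B) ≤ μ A + μ B) (h0 : μ ∅ = 0) {A B : Set α}
    (h : ∀ U : Ultrafilter α, (∀ C, μ C = 0 → Cᶜ ∈ U) → A ∈ U → B ∈ U) : μ A ≤ μ B := by
  have hAB : μ (A \ B) = 0 := by
    by_contra hne
    obtain ⟨U, hU, hAB⟩ := exists_ultrafilter_mem_of_ne_zero hmono hsub h0 hne
    exact U.sdiff_mem_iff.1 hAB |>.2 (h U hU (mem_of_superset hAB sdiff_subset))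
  calc μ A ≤ μ (A \ B ∪ B) := hmono (subset_sdiff_union A B)
    _ ≤ μ B := by simpa only [hAB, zero_add] using hsub (A \ B) B

end NullIdeal

section CoverInf

variable {α X : Type*} (c : Set α → Set X) (μ : Set α → ENNReal)

noncomputable def coverInf (s : Set X) : ENNReal := ⨅ (A) (_ : s ⊆ c A), μ A

variable {c μ}

theorem coverInf_mono {s t : Set X} (h : s ⊆ t) : coverInf c μ s ≤ coverInf c μ t :=
  iInf₂_mono' fun A hA => ⟨A, h.trans hA, le_rfl⟩

theorem coverInf_image (hc : ∀ A B, c A ⊆ c B → μ A ≤ μ B) (A : Set α) :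
    coverInf c μ (c A) = μ A :=
  le_antisymm (iInf₂_le A (subset_rfl : c A ⊆ c A)) (le_iInf₂ fun B hB => hc A B hB)

end CoverInf

theorem statement4_general (φ : Set ℕ → ENNReal)
    (hempty : φ ∅ = 0)
    (hmono : ∀ A B : Set ℕ, A ⊆ B → φ A ≤ φ B)
    (hsubadd : ∀ A B : Set ℕ, φ (A ∪ B) ≤ φ A + φ B)
    (L : Set ℕ → ENNReal)
    (hL : ∀ A : Set ℕ,
      Filter.Tendsto (fun n : ℕ => φ (A \ Set.Iic n)) Filter.atTop (nhds (L A)))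
    (hLuniv : L Set.univ = 1) :
    ∃ ρ : Set (Ult {A : Set ℕ | L A = 0}) → ℝ,
      ρ ∅ = 0 ∧ ρ Set.univ = 1 ∧
      (∀ s t : Set (Ult {A : Set ℕ | L A = 0}),
        @MeasurableSet _ (borel (Ult {A : Set ℕ | L A = 0})) s →
        @MeasurableSet _ (borel (Ult {A : Set ℕ | L A = 0})) t → s ⊆ t → ρ s ≤ ρ t) ∧
      ∀ A : Set ℕ,
        (L A).toReal = ρ {F : Ult {A : Set ℕ | L A = 0} | A ∈ (F : Ultrafilter ℕ)} := by
  have hLmono : Monotone L := tailLimit_mono (fun A B h => hmono A B h) hL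
  have hLempty : L ∅ = 0 := (tailLimit_empty hL).trans hempty
  let c : Set ℕ → Set (Ult {A : Set ℕ | L A = 0}) := fun A => {F | A ∈ (F : Ultrafilter ℕ)}
  have hc : ∀ A B, c A ⊆ c B → L A ≤ L B := fun A B h =>
    le_of_forall_ultrafilter_mem_imp hLmono (tailLimit_union_le hsubadd hL) hLempty
      fun U hU hA => h (a := ⟨U, hU⟩) hA
  have hc_empty : c ∅ = ∅ := eq_empty_of_forall_notMem fun F => (F : Ultrafilter ℕ).empty_notMem
  have hc_univ : c univ = univ := eq_univ_of_forall fun _ => univ_mem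
  have hρ : ∀ A, coverInf c L (c A) = L A := coverInf_image hc
  refine ⟨fun s => (coverInf c L s).toReal, ?_, ?_, ?_, fun A => congrArg ENNReal.toReal (hρ A).symm⟩
  · simp only [← hc_empty, hρ, hLempty, ENNReal.toReal_zero]
  · simp only [← hc_univ, hρ, hLuniv, ENNReal.toReal_one]
  · intro s t _ _ hst
    refine ENNReal.toReal_mono (ne_top_of_le_ne_top ENNReal.one_ne_top ?_) (coverInf_mono hst)
    calc coverInf c L t ≤ coverInf c L (c univ) := coverInf_mono (hc_univ ▸ subset_univ t)
      _ = 1 := by rw [hρ, hLuniv]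

/-- Let `φ` be a lower semicontinuous submeasure, let
`‖A‖_φ = lim_n φ (A \ [0,n])` (the limit `L A` below, which exists by monotonicity),
with `‖ℕ‖_φ = 1`, and let `I = Exh(φ) = {A : ‖A‖_φ = 0}`. Then there is a normalized
capacity `ρ` on the Borel σ-algebra of `Ult I` with `‖A‖_φ = ρ {F ∈ Ult I : A ∈ F}`
for every `A ⊆ ℕ`. -/
theorem statement4 (φ : Set ℕ → ENNReal)
    (hempty : φ ∅ = 0)
    (hmono : ∀ A B : Set ℕ, A ⊆ B → φ A ≤ φ B)
    (hsubadd : ∀ A B : Set ℕ, φ (A ∪ B) ≤ φ A + φ B)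
    (hlsc : ∀ A : Set ℕ,
      Filter.Tendsto (fun n : ℕ => φ (A ∩ Set.Iic n)) Filter.atTop (nhds (φ A)))
    (L : Set ℕ → ENNReal)
    (hL : ∀ A : Set ℕ,
      Filter.Tendsto (fun n : ℕ => φ (A \ Set.Iic n)) Filter.atTop (nhds (L A)))
    (hLuniv : L Set.univ = 1) :
    ∃ ρ : Set (Ult {A : Set ℕ | L A = 0}) → ℝ,
      ρ ∅ = 0 ∧ ρ Set.univ = 1 ∧
      (∀ s t : Set (Ult {A : Set ℕ | L A = 0}),
        @MeasurableSet _ (borel (Ult {A : Set ℕ | L A = 0})) s →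
        @MeasurableSet _ (borel (Ult {A : Set ℕ | L A = 0})) t → s ⊆ t → ρ s ≤ ρ t) ∧
      ∀ A : Set ℕ,
        (L A).toReal = ρ {F : Ult {A : Set ℕ | L A = 0} | A ∈ (F : Ultrafilter ℕ)} :=
  statement4_general φ hempty hmono hsubadd L hL hLuniv
end

section
/- Let X be an Archimedean Riesz space with strong order unit e, endowed with the norm ‖x‖ = inf{λ ≥ 0 : |x| ≤ λe}, and let N be a proper uniformly closed order ideal of X. Then N = ⋂_{ξ ∈ Δ_N} N_ξ, where Δ_N is the set of positive continuous linear functionals ξ on X with ξ(e) = 1 and ξ(N) = {0}, and N_ξ = {x ∈ X : ξ(|x|) = 0}. In particular, Δ_N is nonempty. -/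
/-!
Let `p y = inf {t : y ≤ t • e + n for some n ∈ N}` (`unitGauge e N y`), the least multiple of
`e` dominating `y` modulo `N`. Properness of the solid ideal `N` makes `p` finite, and it is
sublinear. By Hahn–Banach each `z` has a linear minorant `ξ ≤ p` with `ξ z = p z`, and every
linear minorant of `p` is positive, sends `e` to `1` and kills `N`, i.e. lies in `Δ_N`.
If `|x| ∉ N`, then `p |x| > 0`: otherwise `(|x| - t • e)⁺ ∈ N` lies within `t` of `|x|` in the
unit norm for arbitrarily small `t > 0`, and closedness would put `|x|` in `N`. So some
`ξ ∈ Δ_N` has `ξ |x| > 0`.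
-/

open Filter Set

/-- The unit norm `‖x‖ = inf {λ ≥ 0 : |x| ≤ λ • e}` of a Riesz space with strong
order unit `e`. -/
noncomputable def unitNorm {X : Type*} [AddCommGroup X] [Lattice X] [Module ℝ X]
    (e : X) (x : X) : ℝ :=
  sInf {l : ℝ | 0 ≤ l ∧ |x| ≤ l • e}

/-- `Δ_N`: the positive (hence automatically norm-continuous) linear functionals
`ξ` on `X` with `ξ e = 1` annihilating `N`. -/
def DeltaN {X : Type*} [AddCommGroup X] [Lattice X] [Module ℝ X]
    (e : X) (N : Submodule ℝ X) : Set (X → ℝ) :=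
  {ξ | IsLinearMap ℝ ξ ∧ (∀ x : X, 0 ≤ x → 0 ≤ ξ x) ∧ ξ e = 1 ∧ ∀ x ∈ N, ξ x = 0}

open Pointwise LatticeOrderedAddCommGroup

theorem exists_linear_le_sublinear_eq {E : Type*} [AddCommGroup E] [Module ℝ E] (p : E → ℝ)
    (p_hom : ∀ c : ℝ, 0 < c → ∀ x, p (c • x) = c * p x) (p_add : ∀ x y, p (x + y) ≤ p x + p y)
    (z : E) : ∃ g : E →ₗ[ℝ] ℝ, (∀ x, g x ≤ p x) ∧ g z = p z := by
  have p_zero : p 0 = 0 := by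
    have h := p_hom 2 two_pos 0
    rw [smul_zero] at h
    linarith
  let f := LinearPMap.mkSpanSingleton' (σ := RingHom.id ℝ) z (p z) fun c hc => by
    rcases smul_eq_zero.1 hc with rfl | rfl
    · exact zero_smul ℝ _
    · rw [p_zero, smul_zero]
  have hf : ∀ v : f.domain, f v ≤ p v := by
    rintro ⟨v, hv⟩
    obtain ⟨c, rfl⟩ := Submodule.mem_span_singleton.1 hv
    rw [LinearPMap.mkSpanSingleton'_apply, RingHom.id_apply, smul_eq_mul]
    change c * p z ≤ p (c • z)
    rcases lt_trichotomy c 0 with hc | rfl | hc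
    · have hz : 0 ≤ p z + p (-z) := by simpa [p_zero] using p_add z (-z)
      rw [show c • z = (-c) • -z by rw [neg_smul, smul_neg, neg_neg], p_hom (-c) (by linarith)]
      nlinarith
    · simp [p_zero]
    · rw [p_hom c hc]
  obtain ⟨g, hgf, hgp⟩ := exists_extension_of_le_sublinear f p p_hom p_add hf
  exact ⟨g, hgp, (hgf ⟨z, Submodule.mem_span_singleton_self z⟩).trans
    (LinearPMap.mkSpanSingleton'_apply_self _ _ _ _)⟩

section

variable {X : Type*} [AddCommGroup X] [Lattice X] [Module ℝ X] {e : X} {N : Submodule ℝ X}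

theorem unitNorm_nonneg (x : X) : 0 ≤ unitNorm e x :=
  Real.sInf_nonneg fun _ hl => hl.1

theorem unitNorm_le {x : X} {t : ℝ} (ht : 0 ≤ t) (h : |x| ≤ t • e) :
    unitNorm e x ≤ t :=
  csInf_le ⟨0, fun _ hl => hl.1⟩ ⟨ht, h⟩

def IsStrongUnit (e : X) : Prop :=
  ∀ x : X, ∃ l : ℝ, 0 ≤ l ∧ x ≤ l • e

noncomputable def unitGauge (e : X) (N : Submodule ℝ X) (y : X) : ℝ :=
  sInf {t : ℝ | ∃ n ∈ N, y ≤ t • e + n}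

theorem unitGauge_set_nonempty (hunit : IsStrongUnit e) (y : X) :
    {t : ℝ | ∃ n ∈ N, y ≤ t • e + n}.Nonempty := by
  obtain ⟨l, -, hl⟩ := hunit y
  exact ⟨l, 0, N.zero_mem, by rwa [add_zero]⟩

theorem Submodule.eq_top_of_isStrongUnit_mem (hunit : IsStrongUnit e)
    (hsolid : IsSolid (N : Set X)) (he : e ∈ N) : N = ⊤ := by
  refine eq_top_iff.2 fun x _ => ?_
  obtain ⟨l, -, hl⟩ := hunit |x|
  exact hsolid (N.smul_mem l he) (hl.trans (le_abs_self _))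

theorem unitGauge_smul [PosSMulMono ℝ X] {c : ℝ} (hc : 0 < c) (x : X) :
    unitGauge e N (c • x) = c * unitGauge e N x := by
  have hset : {t : ℝ | ∃ n ∈ N, c • x ≤ t • e + n} = c • {t : ℝ | ∃ n ∈ N, x ≤ t • e + n} := by
    ext t
    rw [mem_smul_set_iff_inv_smul_mem₀ hc.ne']
    have hscale : ∀ n : X, c • x ≤ t • e + c • n ↔ x ≤ (c⁻¹ • t) • e + n := fun n => by
      rw [← smul_le_smul_iff_of_pos_left hc (b₁ := x), smul_add, smul_smul, smul_eq_mul,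
        mul_inv_cancel_left₀ hc.ne']
    constructor
    · rintro ⟨n, hn, h⟩
      refine ⟨c⁻¹ • n, N.smul_mem _ hn, (hscale _).1 ?_⟩
      rwa [smul_inv_smul₀ hc.ne']
    · rintro ⟨n, hn, h⟩
      exact ⟨c • n, N.smul_mem _ hn, (hscale n).2 h⟩
  rw [unitGauge, hset, Real.sInf_smul_of_nonneg hc.le, smul_eq_mul, unitGauge]

variable [IsOrderedAddMonoid X]

theorem posPart_sub_smul_mem (hsolid : IsSolid (N : Set X)) {z n : X} {t : ℝ} (hn : n ∈ N)
    (h : z ≤ t • e + n) : (z - t • e)⁺ ∈ N := by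
  refine hsolid hn ?_
  rw [abs_of_nonneg (posPart_nonneg _)]
  exact (posPart_mono (sub_le_iff_le_add'.2 h)).trans (sup_le (le_abs_self n) (abs_nonneg n))

variable [PosSMulMono ℝ X]

theorem IsStrongUnit.nonneg (hunit : IsStrongUnit e) : 0 ≤ e := by
  obtain ⟨l, hl, h⟩ := hunit (-e)
  have hl1 : (0 : ℝ) < l + 1 := by linarith
  rw [← smul_nonneg_iff_nonneg_of_pos_left hl1, add_smul, one_smul]
  exact neg_le_iff_add_nonneg.1 h

theorem le_of_smul_le_smul_add_mem (hunit : IsStrongUnit e) (hsolid : IsSolid (N : Set X))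
    (hN : N ≠ ⊤) {c t : ℝ} {n : X} (hn : n ∈ N) (h : c • e ≤ t • e + n) : c ≤ t := by
  by_contra! hct
  have hct' : 0 < c - t := sub_pos.2 hct
  have hle : (c - t) • e ≤ n := by rwa [sub_smul, sub_le_iff_le_add']
  have he : e ≤ (c - t)⁻¹ • n := by
    rwa [← smul_le_smul_iff_of_pos_left hct', smul_inv_smul₀ hct'.ne']
  refine hN (N.eq_top_of_isStrongUnit_mem hunit hsolid (hsolid (N.smul_mem (c - t)⁻¹ hn) ?_))
  rw [abs_of_nonneg hunit.nonneg]
  exact he.trans (le_abs_self _)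

theorem unitGauge_le (hunit : IsStrongUnit e) (hsolid : IsSolid (N : Set X)) (hN : N ≠ ⊤)
    {y n : X} {t : ℝ} (hn : n ∈ N) (h : y ≤ t • e + n) : unitGauge e N y ≤ t := by
  refine csInf_le ?_ ⟨n, hn, h⟩
  obtain ⟨l, -, hl⟩ := hunit (-y)
  refine ⟨-l, fun s ⟨m, hm, hs⟩ => le_of_smul_le_smul_add_mem hunit hsolid hN hm ?_⟩
  rw [neg_smul]
  exact (neg_le.1 hl).trans hs

theorem unitGauge_add_le (hunit : IsStrongUnit e) (hsolid : IsSolid (N : Set X)) (hN : N ≠ ⊤)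
    (x y : X) : unitGauge e N (x + y) ≤ unitGauge e N x + unitGauge e N y := by
  have H : ∀ a ∈ {t : ℝ | ∃ n ∈ N, x ≤ t • e + n}, ∀ b ∈ {t : ℝ | ∃ n ∈ N, y ≤ t • e + n},
      unitGauge e N (x + y) ≤ a + b := by
    rintro a ⟨n, hn, hxn⟩ b ⟨m, hm, hym⟩
    refine unitGauge_le hunit hsolid hN (N.add_mem hn hm) ?_
    calc x + y ≤ (a • e + n) + (b • e + m) := add_le_add hxn hym
      _ = (a + b) • e + (n + m) := by rw [add_smul]; abel
  rw [← sub_le_iff_le_add']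
  refine le_csInf (unitGauge_set_nonempty hunit y) fun b hb => ?_
  rw [sub_le_comm]
  exact le_csInf (unitGauge_set_nonempty hunit x) fun a ha => by linarith [H a ha b hb]

theorem mem_deltaN_of_le_unitGauge (hunit : IsStrongUnit e) (hsolid : IsSolid (N : Set X))
    (hN : N ≠ ⊤) (g : X →ₗ[ℝ] ℝ) (hg : ∀ x, g x ≤ unitGauge e N x) : ⇑g ∈ DeltaN e N := by
  have hle : ∀ {y n : X} {t : ℝ}, n ∈ N → y ≤ t • e + n → g y ≤ t := fun hn h =>
    (hg _).trans (unitGauge_le hunit hsolid hN hn h)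
  refine ⟨g.isLinear, fun x hx => ?_, ?_, fun m hm => ?_⟩
  · have := hle N.zero_mem (show -x ≤ (0 : ℝ) • e + 0 by simpa using hx)
    rw [map_neg] at this
    linarith
  · have h1 := hle N.zero_mem (show e ≤ (1 : ℝ) • e + 0 by simp)
    have h2 := hle N.zero_mem (show -e ≤ (-1 : ℝ) • e + 0 by simp)
    rw [map_neg] at h2
    linarith
  · have h1 := hle hm (show m ≤ (0 : ℝ) • e + m by simp)
    have h2 := hle (N.neg_mem hm) (show -m ≤ (0 : ℝ) • e + -m by simp)
    rw [map_neg] at h2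
    linarith

theorem unitNorm_posPart_sub_smul_sub_le (he : 0 ≤ e) {z : X} (hz : 0 ≤ z) {t : ℝ}
    (ht : 0 ≤ t) : unitNorm e ((z - t • e)⁺ - z) ≤ t := by
  refine unitNorm_le ht ?_
  have hu : (z - t • e)⁺ ≤ z := sup_le (sub_le_self _ (smul_nonneg ht he)) hz
  rw [abs_sub_comm, abs_of_nonneg (sub_nonneg.2 hu)]
  exact sub_le_comm.1 (le_posPart _)

theorem mem_of_unitGauge_nonpos (hunit : IsStrongUnit e) (hsolid : IsSolid (N : Set X))
    (hN : N ≠ ⊤) (hclosed : ∀ (x : X) (u : ℕ → X), (∀ n, u n ∈ N) →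
      Tendsto (fun n => unitNorm e (u n - x)) atTop (nhds 0) → x ∈ N)
    {z : X} (hz : 0 ≤ z) (h : unitGauge e N z ≤ 0) : z ∈ N := by
  have happrox : ∀ k : ℕ, ∃ t ∈ {t : ℝ | ∃ n ∈ N, z ≤ t • e + n}, t < 1 / ((k : ℝ) + 1) :=
    fun k => exists_lt_of_csInf_lt (unitGauge_set_nonempty hunit z) (h.trans_lt (by positivity))
  choose t ht htk using happrox
  have ht0 : ∀ k, 0 ≤ t k := fun k => by
    obtain ⟨n, hn, hzn⟩ := ht k
    exact le_of_smul_le_smul_add_mem hunit hsolid hN hn (by rw [zero_smul]; exact hz.trans hzn)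
  refine hclosed z (fun k => (z - t k • e)⁺) (fun k => ?_) ?_
  · obtain ⟨n, hn, hzn⟩ := ht k
    exact posPart_sub_smul_mem hsolid hn hzn
  · refine squeeze_zero (fun k => unitNorm_nonneg _) (fun k => ?_)
      tendsto_one_div_add_atTop_nhds_zero_nat
    exact (unitNorm_posPart_sub_smul_sub_le hunit.nonneg hz (ht0 k)).trans (htk k).le

theorem mem_iff_forall_deltaN_abs_eq_zero (hunit : IsStrongUnit e)
    (hsolid : IsSolid (N : Set X)) (hN : N ≠ ⊤) (hclosed : ∀ (x : X) (u : ℕ → X),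
      (∀ n, u n ∈ N) → Tendsto (fun n => unitNorm e (u n - x)) atTop (nhds 0) → x ∈ N)
    (x : X) : x ∈ N ↔ ∀ ξ ∈ DeltaN e N, ξ |x| = 0 := by
  refine ⟨fun hx ξ hξ => hξ.2.2.2 _ (hsolid hx (abs_abs x).le), fun hx => ?_⟩
  by_contra hxN
  have habs : |x| ∉ N := fun h => hxN (hsolid h (abs_abs x).ge)
  have hpos : 0 < unitGauge e N |x| := lt_of_not_ge fun h =>
    habs (mem_of_unitGauge_nonpos hunit hsolid hN hclosed (abs_nonneg x) h)
  obtain ⟨g, hg, hgx⟩ := exists_linear_le_sublinear_eq (unitGauge e N)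
    (fun _ hc => unitGauge_smul hc) (unitGauge_add_le hunit hsolid hN) |x|
  have := hx g (mem_deltaN_of_le_unitGauge hunit hsolid hN g hg)
  linarith

end

theorem statement12_general {X : Type*} [AddCommGroup X] [Lattice X] [Module ℝ X]
    (hadd : ∀ x y z : X, x ≤ y → x + z ≤ y + z)
    (hsmul : ∀ (c : ℝ) (x : X), 0 ≤ c → 0 ≤ x → 0 ≤ c • x)
    (e : X)
    (hunit : ∀ x : X, ∃ l : ℝ, 0 ≤ l ∧ -(l • e) ≤ x ∧ x ≤ l • e)
    (N : Submodule ℝ X)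
    (hsolid : ∀ x y : X, |x| ≤ |y| → y ∈ N → x ∈ N)
    (hproper : (N : Set X) ≠ Set.univ)
    (hclosed : ∀ (x : X) (u : ℕ → X), (∀ n, u n ∈ N) →
      Filter.Tendsto (fun n => unitNorm e (u n - x)) Filter.atTop (nhds 0) → x ∈ N) :
    (DeltaN e N).Nonempty ∧
    (N : Set X) = ⋂ ξ ∈ DeltaN e N, {x : X | ξ |x| = 0} := by
  have : IsOrderedAddMonoid X := { add_le_add_left := fun a b h c => hadd a b c h }
  have : PosSMulMono ℝ X := .of_smul_nonneg fun c hc x hx => hsmul c x hc hx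
  have hN : N ≠ ⊤ := fun h => hproper (by rw [h, Submodule.top_coe])
  have hN_eq : (N : Set X) = ⋂ ξ ∈ DeltaN e N, {x : X | ξ |x| = 0} := by
    ext x
    simpa using mem_iff_forall_deltaN_abs_eq_zero (fun y => (hunit y).imp fun _ h => ⟨h.1, h.2.2⟩)
      (fun y hy x hxy => hsolid x y hxy hy) hN hclosed x
  refine ⟨Set.nonempty_iff_ne_empty.2 fun hempty => hproper ?_, hN_eq⟩
  rw [hN_eq, hempty]
  simp

/-- If `N` is a proper uniformly closed (equivalently, closed in the
unit norm) order ideal of an Archimedean Riesz space `X` with strong order unit `e`,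
then `N = ⋂_{ξ ∈ Δ_N} N_ξ` where `N_ξ = {x : ξ |x| = 0}`; in particular `Δ_N ≠ ∅`. -/
theorem statement12 {X : Type*} [AddCommGroup X] [Lattice X] [Module ℝ X]
    (hadd : ∀ x y z : X, x ≤ y → x + z ≤ y + z)
    (hsmul : ∀ (c : ℝ) (x : X), 0 ≤ c → 0 ≤ x → 0 ≤ c • x)
    (harch : ∀ x y : X, 0 ≤ x → (∀ n : ℕ, n • x ≤ y) → x = 0)
    (e : X) (he : e ≠ 0)
    (hunit : ∀ x : X, ∃ l : ℝ, 0 ≤ l ∧ -(l • e) ≤ x ∧ x ≤ l • e)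
    (N : Submodule ℝ X)
    (hsolid : ∀ x y : X, |x| ≤ |y| → y ∈ N → x ∈ N)
    (hproper : (N : Set X) ≠ Set.univ)
    (hclosed : ∀ (x : X) (u : ℕ → X), (∀ n, u n ∈ N) →
      Filter.Tendsto (fun n => unitNorm e (u n - x)) Filter.atTop (nhds 0) → x ∈ N) :
    (DeltaN e N).Nonempty ∧
    (N : Set X) = ⋂ ξ ∈ DeltaN e N, {x : X | ξ |x| = 0} :=
  statement12_general hadd hsmul e hunit N hsolid hproper hclosed
end

section
/- Let I be an ideal on the positive integers N containing all finite sets. A bounded real sequence x belongs to c₀(I) (i.e., I-lim x = 0) if and only if ξ(|x|) = 0 for every positive continuous linear functional ξ on ℓ∞ with ξ(e) = 1 satisfying ξ(1_A) = 0 for all A ∈ I. Equivalently, c₀(I) ∩ ℓ∞ = {x ∈ ℓ∞ : ∫_N |x| dμ = 0 for all μ ∈ M(I)}. -/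
open Filter Set
open scoped BoundedContinuousFunction

/-- The indicator sequence `1_A` of `A ⊆ ℕ`, as a bounded sequence. -/
noncomputable def indBCF (A : Set ℕ) : ℕ →ᵇ ℝ :=
  BoundedContinuousFunction.ofNormedAddCommGroupDiscrete (Set.indicator A 1) 1 (by
    intro n; by_cases h : n ∈ A <;> simp [Set.indicator, h])

/-- The pointwise absolute value `|x|` of a bounded sequence. -/
noncomputable def absBCF (x : ℕ →ᵇ ℝ) : ℕ →ᵇ ℝ :=
  BoundedContinuousFunction.ofNormedAddCommGroupDiscrete (fun n => |x n|) ‖x‖ (by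
    intro n
    simpa [Real.norm_eq_abs, abs_abs] using x.norm_coe_le_norm n)

/-!
If `x` is `I`-convergent to `0`, then `|x| ≤ ε e + ‖x‖ 1_{|x| ≥ ε}` pointwise, and a
positive functional killing `1_A` for `A ∈ I` gives `ξ(|x|) ≤ ε` for every `ε > 0`.
Conversely, if `A = {|x| ≥ ε} ∉ I`, then `A` together with the complements of the sets of `I`
generates a proper filter; the limit along an ultrafilter refining it is a positive functional
with `ξ(e) = 1` that kills `1_B` for `B ∈ I`, yet `ξ(|x|) ≥ ε`.
-/

open Topology

lemma indBCF_apply (A : Set ℕ) (n : ℕ) : indBCF A n = A.indicator 1 n := rfl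

lemma absBCF_apply (x : ℕ →ᵇ ℝ) (n : ℕ) : absBCF x n = |x n| := rfl

namespace BoundedContinuousFunction

variable {α : Type*} [TopologicalSpace α]

lemma tendsto_limUnder_ultrafilter (U : Ultrafilter α) (f : α →ᵇ ℝ) :
    Tendsto f U (𝓝 (limUnder U f)) := by
  have hrange : (U.map f : Filter ℝ) ≤ 𝓟 (Metric.closedBall 0 ‖f‖) := by
    rw [Ultrafilter.coe_map, le_principal_iff]
    exact mem_map.2 <| univ_mem' fun x => mem_closedBall_zero_iff.2 (f.norm_coe_le_norm x)
  obtain ⟨a, -, ha⟩ := (isCompact_closedBall (0 : ℝ) ‖f‖).ultrafilter_le_nhds _ hrange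
  have ha : Tendsto f U (𝓝 a) := by rwa [Ultrafilter.coe_map] at ha
  rwa [ha.limUnder_eq]

noncomputable def ultrafilterLim (U : Ultrafilter α) : (α →ᵇ ℝ) →L[ℝ] ℝ :=
  LinearMap.mkContinuous
    { toFun := fun f => limUnder U f
      map_add' := fun f g => tendsto_nhds_unique (tendsto_limUnder_ultrafilter U (f + g))
        ((tendsto_limUnder_ultrafilter U f).add (tendsto_limUnder_ultrafilter U g))
      map_smul' := fun c f => tendsto_nhds_unique (tendsto_limUnder_ultrafilter U (c • f))
        ((tendsto_limUnder_ultrafilter U f).const_smul c) }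
    1 fun f => by
      simpa using le_of_tendsto' (tendsto_limUnder_ultrafilter U f).norm f.norm_coe_le_norm

variable (U : Ultrafilter α)

lemma tendsto_ultrafilterLim (f : α →ᵇ ℝ) : Tendsto f U (𝓝 (ultrafilterLim U f)) :=
  tendsto_limUnder_ultrafilter U f

lemma ultrafilterLim_eq_of_eventually_eq {f : α →ᵇ ℝ} {c : ℝ} (h : ∀ᶠ x in U, f x = c) :
    ultrafilterLim U f = c :=
  tendsto_nhds_unique (tendsto_ultrafilterLim U f)
    (tendsto_const_nhds.congr' (h.mono fun _ hx => hx.symm))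

lemma le_ultrafilterLim_of_eventually_le {f : α →ᵇ ℝ} {c : ℝ} (h : ∀ᶠ x in U, c ≤ f x) :
    c ≤ ultrafilterLim U f :=
  ge_of_tendsto (tendsto_ultrafilterLim U f) h

end BoundedContinuousFunction

open BoundedContinuousFunction

lemma map_le_map_of_forall_le {α : Type*} [TopologicalSpace α] (ξ : (α →ᵇ ℝ) →L[ℝ] ℝ)
    (hpos : ∀ y : α →ᵇ ℝ, (∀ n, 0 ≤ y n) → 0 ≤ ξ y) {y z : α →ᵇ ℝ} (h : ∀ n, y n ≤ z n) :
    ξ y ≤ ξ z := by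
  have := hpos (z - y) fun n => sub_nonneg.2 (h n)
  rwa [map_sub, sub_nonneg] at this

lemma absBCF_le (x : ℕ →ᵇ ℝ) {ε : ℝ} (hε : 0 ≤ ε) (n : ℕ) :
    absBCF x n ≤ (ε • indBCF univ + ‖x‖ • indBCF {n | ε ≤ |x n|}) n := by
  have hxn : |x n| ≤ ‖x‖ := by simpa [Real.norm_eq_abs] using x.norm_coe_le_norm n
  by_cases hn : ε ≤ |x n| <;>
    simp [indBCF_apply, absBCF_apply, Set.indicator, hn] <;> linarith

lemma map_absBCF_eq_zero {I : Set (Set ℕ)} {x : ℕ →ᵇ ℝ}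
    (hx : ∀ ε : ℝ, 0 < ε → {n : ℕ | ε ≤ |x n|} ∈ I) (ξ : (ℕ →ᵇ ℝ) →L[ℝ] ℝ)
    (hpos : ∀ y : ℕ →ᵇ ℝ, (∀ n : ℕ, 0 ≤ y n) → 0 ≤ ξ y) (h1 : ξ (indBCF univ) = 1)
    (hI : ∀ A ∈ I, ξ (indBCF A) = 0) : ξ (absBCF x) = 0 := by
  refine le_antisymm (le_of_forall_pos_le_add fun ε hε => ?_)
    (hpos _ fun n => abs_nonneg (x n))
  calc ξ (absBCF x) ≤ ξ (ε • indBCF univ + ‖x‖ • indBCF {n | ε ≤ |x n|}) :=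
        map_le_map_of_forall_le ξ hpos (absBCF_le x hε.le)
    _ = 0 + ε := by simp [h1, hI _ (hx ε hε)]

namespace IsIdealOn

variable {I : Set (Set ℕ)}

def dualFilter (hI : IsIdealOn I) : Filter ℕ :=
  comk (· ∈ I) (hI.2.2.2 ∅ finite_empty) (fun t ht s hst => hI.1 s t hst ht)
    (fun s hs t ht => hI.2.1 s t hs ht)

lemma exists_ultrafilter_of_notMem (hI : IsIdealOn I) {A : Set ℕ} (hA : A ∉ I) :
    ∃ U : Ultrafilter ℕ, A ∈ U ∧ ∀ B ∈ I, Bᶜ ∈ U := by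
  have : (hI.dualFilter ⊓ 𝓟 A).NeBot := by
    refine inf_principal_neBot_iff.2 fun s hs => not_disjoint_iff_nonempty_inter.1 fun hdisj =>
      hA (hI.1 A sᶜ hdisj.subset_compl_left hs)
  obtain ⟨U, hU⟩ := Ultrafilter.exists_le (hI.dualFilter ⊓ 𝓟 A)
  exact ⟨U, hU (mem_inf_of_right (mem_principal_self A)),
    fun B hB => hU (mem_inf_of_left (compl_mem_comk.2 hB))⟩

end IsIdealOn

/-- A bounded real sequence `x` is `I`-convergent to `0` if and only
if `ξ(|x|) = 0` for every positive continuous linear functional `ξ` on `ℓ∞` with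
`ξ 1 = 1` satisfying `ξ(1_A) = 0` for all `A ∈ I`. -/
theorem statement15 (I : Set (Set ℕ)) (hI : IsIdealOn I) (x : ℕ →ᵇ ℝ) :
    (∀ ε : ℝ, 0 < ε → {n : ℕ | ε ≤ |x n|} ∈ I) ↔
      ∀ ξ : (ℕ →ᵇ ℝ) →L[ℝ] ℝ,
        (∀ y : ℕ →ᵇ ℝ, (∀ n : ℕ, 0 ≤ y n) → 0 ≤ ξ y) →
        ξ (indBCF Set.univ) = 1 →
        (∀ A ∈ I, ξ (indBCF A) = 0) →
        ξ (absBCF x) = 0 := by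
  refine ⟨fun hx => map_absBCF_eq_zero hx, fun h ε hε => ?_⟩
  by_contra hA
  obtain ⟨U, hAU, hIU⟩ := hI.exists_ultrafilter_of_notMem hA
  have hzero : ultrafilterLim U (absBCF x) = 0 := by
    refine h _ (fun y hy => le_ultrafilterLim_of_eventually_le U (.of_forall hy))
      (ultrafilterLim_eq_of_eventually_eq U (.of_forall fun n => by simp [indBCF_apply]))
      fun B hB => ultrafilterLim_eq_of_eventually_eq U ?_
    filter_upwards [hIU B hB] with n hn
    simp [indBCF_apply, indicator_of_notMem hn]
  have hge : ε ≤ ultrafilterLim U (absBCF x) := le_ultrafilterLim_of_eventually_le U hAU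
  linarith
end

section
/- Let I be an ideal on the positive integers N containing all finite sets, and let ν : P(N) → R be an I-invariant normalized capacity. If x : N → [0,∞) is a bounded sequence taking only finitely many values, and z : N → [0,∞) is a bounded sequence with I-lim z = 0, then the Choquet integrals with respect to ν satisfy ∫_N (x + z) dν = ∫_N x dν. -/
open Filter Set MeasureTheory
open scoped symmDiff

/-- Let `ν` be an `I`-invariant normalized capacity on `𝒫(ℕ)`. If
`x : ℕ → [0,∞)` is a bounded sequence taking finitely many values and `z : ℕ → [0,∞)`
is a bounded sequence with `I`-`lim z = 0`, then `∫ (x + z) dν = ∫ x dν` (Choquet). -/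
theorem statement16 (I : Set (Set ℕ)) (hI : IsIdealOn I)
    (ν : Set ℕ → ℝ)
    (hmono : ∀ A B : Set ℕ, A ⊆ B → ν A ≤ ν B)
    (hempty : ν ∅ = 0) (huniv : ν Set.univ = 1)
    (hinv : ∀ A B : Set ℕ, A ∆ B ∈ I → ν A = ν B)
    (x : ℕ → ℝ) (hx0 : ∀ n, 0 ≤ x n) (hxfin : (Set.range x).Finite)
    (hxbdd : ∃ C : ℝ, ∀ n, |x n| ≤ C)
    (z : ℕ → ℝ) (hz0 : ∀ n, 0 ≤ z n)
    (hzbdd : ∃ C : ℝ, ∀ n, |z n| ≤ C)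
    (hzlim : ∀ ε : ℝ, 0 < ε → {n : ℕ | ε ≤ |z n|} ∈ I) :
    choquetInt ν (fun n => x n + z n) = choquetInt ν x := by
  obtain ⟨hIdown, hIunion, hIuniv, hIfin⟩ := hI
  have key : ∀ t : ℝ, 0 < t → ν {s | t ≤ x s + z s} = ν {s | t ≤ x s} := by
    intro t ht
    set F : Set ℝ := insert t ((fun v => t - v) '' (Set.range x ∩ Set.Iio t)) with hF
    have hFfin : F.Finite := (((hxfin.inter_of_left _).image _).insert t)
    have hFne : F.Nonempty := ⟨t, Set.mem_insert _ _⟩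
    have hεF : sInf F ∈ F := hFne.csInf_mem hFfin
    have hεpos : 0 < sInf F := by
      rcases hεF with h | h
      · rw [h]; exact ht
      · obtain ⟨v, ⟨_, hv⟩, heq⟩ := h
        simp only [Set.mem_Iio] at hv
        simp only at heq
        linarith
    have hsub : {s | t ≤ x s + z s} \ {s | t ≤ x s} ⊆ {n | sInf F ≤ |z n|} := by
      rintro n ⟨h1, h2⟩
      simp only [Set.mem_setOf_eq, not_le] at h1 h2 ⊢
      have h3 : t - x n ∈ F :=
        Set.mem_insert_of_mem _ ⟨x n, ⟨Set.mem_range_self n, h2⟩, rfl⟩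
      have h4 := csInf_le hFfin.bddBelow h3
      rw [abs_of_nonneg (hz0 n)]
      linarith
    have hAB : {s | t ≤ x s} ⊆ {s | t ≤ x s + z s} := fun n hn => by
      simp only [Set.mem_setOf_eq] at hn ⊢
      have := hz0 n
      linarith
    apply hinv
    rw [Set.symmDiff_def]
    have hd1 : {s | t ≤ x s + z s} \ {s | t ≤ x s} ∈ I :=
      hIdown _ _ hsub (hzlim _ hεpos)
    have hd2 : {s : ℕ | t ≤ x s} \ {s | t ≤ x s + z s} = ∅ :=
      Set.diff_eq_empty.mpr hAB
    rw [hd2]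
    simpa using hIunion _ _ hd1 (hIfin ∅ Set.finite_empty)
  unfold choquetInt
  congr 1
  · refine setIntegral_congr_fun measurableSet_Ioi ?_
    intro t ht
    exact key t ht
  · refine setIntegral_congr_fun measurableSet_Iio ?_
    intro t ht
    have h1 : {s : ℕ | t ≤ x s + z s} = Set.univ := by
      ext n; simp only [Set.mem_setOf_eq, Set.mem_univ, iff_true]
      have := hz0 n; have := hx0 n
      have : t < 0 := ht
      linarith
    have h2 : {s : ℕ | t ≤ x s} = Set.univ := by
      ext n; simp only [Set.mem_setOf_eq, Set.mem_univ, iff_true]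
      have := hx0 n
      have : t < 0 := ht
      linarith
    simp [h1, h2]
end

section
/- Let I be an ideal on the positive integers N containing all finite sets, and let ν : P(N) → R be an I-invariant normalized capacity. Then the Choquet integral functional V(x) = ∫_N x dν on bounded real sequences is c₀(I)-invariant: for all bounded sequences x, y with I-lim (x − y) = 0, one has ∫_N x dν = ∫_N y dν. -/
open Filter Set MeasureTheory
open scoped symmDiff

/-- For a bounded sequence, the Choquet integral equals a finite interval integral
of the survival function, minus `C`. -/
lemma aux_choquet_eq (ν : Set ℕ → ℝ) (f : ℕ → ℝ) (C : ℝ) (hC : 0 < C)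
    (huniv : ν Set.univ = 1)
    (hanti : Antitone (fun t : ℝ => ν {s | t ≤ f s}))
    (hF0 : ∀ t : ℝ, C < t → ν {s | t ≤ f s} = 0)
    (hF1 : ∀ t : ℝ, t ≤ -C → ν {s | t ≤ f s} = 1) :
    choquetInt ν f = (∫ t in (-C)..C, ν {s | t ≤ f s}) - C := by
  set F : ℝ → ℝ := fun t => ν {s | t ≤ f s} with hF
  have h1 : (∫ t in Set.Ioi (0:ℝ), F t) = ∫ t in (0:ℝ)..C, F t := by
    rw [intervalIntegral.integral_of_le hC.le]
    exact setIntegral_eq_of_subset_of_forall_diff_eq_zero measurableSet_Ioi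
      (fun t ht => ht.1) (fun t ht => hF0 t (by
        rcases ht with ⟨ht1, ht2⟩
        simp only [mem_Ioc, not_and, not_le] at ht2
        exact ht2 ht1))
  have h2 : (∫ t in Set.Iio (0:ℝ), (F t - ν Set.univ)) = ∫ t in (-C)..(0:ℝ), (F t - 1) := by
    rw [intervalIntegral.integral_of_le (by linarith : -C ≤ (0:ℝ)),
      integral_Ioc_eq_integral_Ioo]
    simp only [huniv]
    exact setIntegral_eq_of_subset_of_forall_diff_eq_zero measurableSet_Iio
      (fun t ht => ht.2) (fun t ht => by
        rcases ht with ⟨ht1, ht2⟩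
        simp only [mem_Ioo, not_and, not_lt] at ht2
        have : t ≤ -C := by by_contra h; push_neg at h; exact absurd (ht2 h) (not_le.mpr ht1)
        rw [show F t = 1 from hF1 t this]; ring)
  have hFi : ∀ a b : ℝ, IntervalIntegrable F MeasureTheory.volume a b :=
    fun a b => hanti.intervalIntegrable
  have h3 : (∫ t in (-C)..(0:ℝ), (F t - 1)) = (∫ t in (-C)..(0:ℝ), F t) - C := by
    rw [intervalIntegral.integral_sub (hFi _ _) intervalIntegrable_const,
      intervalIntegral.integral_const]
    simp
  have h4 : (∫ t in (-C)..(0:ℝ), F t) + (∫ t in (0:ℝ)..C, F t) = ∫ t in (-C)..C, F t :=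
    intervalIntegral.integral_add_adjacent_intervals (hFi _ _) (hFi _ _)
  rw [choquetInt, h1, h2, h3, ← h4]; ring

/-- If `G t ≤ F (t - ε)` pointwise, then the interval integral of `G` exceeds that
of `F` by at most `ε`. -/
lemma aux_interval_le (F G : ℝ → ℝ) (C ε : ℝ) (hC : 0 < C) (hε : 0 < ε) (hεC : ε ≤ C)
    (hFanti : Antitone F) (hGanti : Antitone G)
    (hFnn : ∀ t, 0 ≤ F t) (hF1 : ∀ t, t ≤ -C → F t = 1)
    (hGF : ∀ t, G t ≤ F (t - ε)) :
    (∫ t in (-C)..C, G t) ≤ (∫ t in (-C)..C, F t) + ε := by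
  have hFε : Antitone (fun t => F (t - ε)) := fun a b h => hFanti (by linarith)
  have step1 : (∫ t in (-C)..C, G t) ≤ ∫ t in (-C)..C, F (t - ε) :=
    intervalIntegral.integral_mono_on (by linarith) hGanti.intervalIntegrable
      hFε.intervalIntegrable (fun t _ => hGF t)
  have step2 : (∫ t in (-C)..C, F (t - ε)) = ∫ t in (-C - ε)..(C - ε), F t :=
    intervalIntegral.integral_comp_sub_right F ε
  have step3 : (∫ t in (-C - ε)..(-C), F t) + (∫ t in (-C)..(C - ε), F t)
      = ∫ t in (-C - ε)..(C - ε), F t :=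
    intervalIntegral.integral_add_adjacent_intervals hFanti.intervalIntegrable
      hFanti.intervalIntegrable
  have step4 : (∫ t in (-C - ε)..(-C), F t) = ε := by
    rw [intervalIntegral.integral_congr (g := fun _ => (1:ℝ))
      (fun t ht => by
        rw [Set.uIcc_of_le (by linarith : -C - ε ≤ -C)] at ht
        exact hF1 t ht.2)]
    rw [intervalIntegral.integral_const]; simp
  have step5 : (∫ t in (-C)..(C - ε), F t) ≤ ∫ t in (-C)..C, F t := by
    have := intervalIntegral.integral_add_adjacent_intervals
      (a := -C) (b := C - ε) (c := C) (f := F) (μ := MeasureTheory.volume)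
      hFanti.intervalIntegrable hFanti.intervalIntegrable
    have hnn : 0 ≤ ∫ t in (C - ε)..C, F t :=
      intervalIntegral.integral_nonneg (by linarith) (fun t _ => hFnn t)
    linarith
  linarith [step1, step2 ▸ step1]

/-- Let `ν` be an `I`-invariant normalized capacity on `𝒫(ℕ)`. Then
the Choquet integral functional is `c₀(I)`-invariant: for all bounded sequences `x, y`
with `I`-`lim (x − y) = 0` one has `∫ x dν = ∫ y dν`. -/
theorem statement17 (I : Set (Set ℕ)) (hI : IsIdealOn I)
    (ν : Set ℕ → ℝ)
    (hmono : ∀ A B : Set ℕ, A ⊆ B → ν A ≤ ν B)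
    (hempty : ν ∅ = 0) (huniv : ν Set.univ = 1)
    (hinv : ∀ A B : Set ℕ, A ∆ B ∈ I → ν A = ν B)
    (x y : ℕ → ℝ)
    (hxbdd : ∃ C : ℝ, ∀ n, |x n| ≤ C)
    (hybdd : ∃ C : ℝ, ∀ n, |y n| ≤ C)
    (hlim : ∀ ε : ℝ, 0 < ε → {n : ℕ | ε ≤ |x n - y n|} ∈ I) :
    choquetInt ν x = choquetInt ν y := by
  obtain ⟨Cx, hCx⟩ := hxbdd
  obtain ⟨Cy, hCy⟩ := hybdd
  set C : ℝ := |Cx| + |Cy| + 1 with hCdef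
  have hC : 0 < C := by positivity
  have hxC : ∀ n, |x n| ≤ C := fun n =>
    le_trans (hCx n) (by have := le_abs_self Cx; have := abs_nonneg Cy; linarith)
  have hyC : ∀ n, |y n| ≤ C := fun n =>
    le_trans (hCy n) (by have := le_abs_self Cy; have := abs_nonneg Cx; linarith)
  have hanti : ∀ f : ℕ → ℝ, Antitone (fun t : ℝ => ν {s | t ≤ f s}) := by
    intro f a b hab
    exact hmono _ _ (fun s hs => le_trans hab hs)
  have hF0 : ∀ (f : ℕ → ℝ), (∀ n, |f n| ≤ C) → ∀ t : ℝ, C < t → ν {s | t ≤ f s} = 0 := by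
    intro f hf t ht
    have : {s | t ≤ f s} = (∅ : Set ℕ) := by
      ext s; simp only [mem_setOf_eq, mem_empty_iff_false, iff_false, not_le]
      have := abs_le.mp (hf s); linarith [this.2]
    rw [this, hempty]
  have hF1 : ∀ (f : ℕ → ℝ), (∀ n, |f n| ≤ C) → ∀ t : ℝ, t ≤ -C → ν {s | t ≤ f s} = 1 := by
    intro f hf t ht
    have : {s | t ≤ f s} = (Set.univ : Set ℕ) := by
      ext s; simp only [mem_setOf_eq, mem_univ, iff_true]
      have := abs_le.mp (hf s); linarith [this.1]
    rw [this, huniv]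
  have hFnn : ∀ A : Set ℕ, 0 ≤ ν A := fun A => hempty ▸ hmono ∅ A (empty_subset A)
  -- key pointwise bound via the ideal
  have key : ∀ (f g : ℕ → ℝ), (∀ ε : ℝ, 0 < ε → {n : ℕ | ε ≤ |f n - g n|} ∈ I) →
      ∀ (ε t : ℝ), 0 < ε → ν {s | t ≤ g s} ≤ ν {s | t - ε ≤ f s} := by
    intro f g hl ε t hε
    set E := {n : ℕ | ε ≤ |f n - g n|} with hE
    have hEI : E ∈ I := hl ε hε
    have hsub : {s | t ≤ g s} ⊆ {s | t - ε ≤ f s} ∪ E := by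
      intro s hs
      by_cases h : ε ≤ |f s - g s|
      · exact Or.inr h
      · push_neg at h
        have := abs_lt.mp h
        exact Or.inl (by simp only [mem_setOf_eq] at hs ⊢; linarith [this.1])
    have heq : ν ({s | t - ε ≤ f s} ∪ E) = ν {s | t - ε ≤ f s} := by
      apply hinv
      apply hI.1 _ E _ hEI
      intro n hn
      simp only [Set.symmDiff_def, Set.mem_union, Set.mem_diff, Set.mem_union] at hn
      rcases hn with ⟨h1, h2⟩ | ⟨h1, h2⟩
      · tauto
      · exact absurd (Or.inl h1) h2
    calc ν {s | t ≤ g s} ≤ ν ({s | t - ε ≤ f s} ∪ E) := hmono _ _ hsub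
      _ = ν {s | t - ε ≤ f s} := heq
  have hlim' : ∀ ε : ℝ, 0 < ε → {n : ℕ | ε ≤ |y n - x n|} ∈ I := by
    intro ε hε
    have : {n : ℕ | ε ≤ |y n - x n|} = {n : ℕ | ε ≤ |x n - y n|} := by
      ext n; simp [abs_sub_comm]
    rw [this]; exact hlim ε hε
  have hxeq := aux_choquet_eq ν x C hC huniv (hanti x) (hF0 x hxC) (hF1 x hxC)
  have hyeq := aux_choquet_eq ν y C hC huniv (hanti y) (hF0 y hyC) (hF1 y hyC)
  -- the two-sided ε-inequality
  have hineq : ∀ ε : ℝ, 0 < ε → ε ≤ C →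
      ((∫ t in (-C)..C, ν {s | t ≤ y s}) ≤ (∫ t in (-C)..C, ν {s | t ≤ x s}) + ε ∧
       (∫ t in (-C)..C, ν {s | t ≤ x s}) ≤ (∫ t in (-C)..C, ν {s | t ≤ y s}) + ε) := by
    intro ε hε hεC
    constructor
    · exact aux_interval_le _ _ C ε hC hε hεC (hanti x) (hanti y)
        (fun t => hFnn _) (hF1 x hxC) (fun t => key x y hlim ε t hε)
    · exact aux_interval_le _ _ C ε hC hε hεC (hanti y) (hanti x)
        (fun t => hFnn _) (hF1 y hyC) (fun t => key y x hlim' ε t hε)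
  rw [hxeq, hyeq]
  have hab : (∫ t in (-C)..C, ν {s | t ≤ x s}) = ∫ t in (-C)..C, ν {s | t ≤ y s} := by
    apply le_antisymm
    · apply le_of_forall_pos_le_add
      intro ε hε
      have hδ : 0 < min ε C := lt_min hε hC
      have := (hineq (min ε C) hδ (min_le_right _ _)).2
      have : (∫ t in (-C)..C, ν {s | t ≤ x s}) ≤ (∫ t in (-C)..C, ν {s | t ≤ y s}) + min ε C :=
        this
      linarith [min_le_left ε C]
    · apply le_of_forall_pos_le_add
      intro ε hε
      have hδ : 0 < min ε C := lt_min hε hC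
      have := (hineq (min ε C) hδ (min_le_right _ _)).1
      linarith [min_le_left ε C]
  rw [hab]
end
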